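/- arXiv:1506.03155 — 3 statements merged into one kernel-verified Lean document; each statement's English description precedes it below -/
import Mathlib

section
/- In the proof of the hyperplane transversality theorem, the following induction step is valid: let F_1,…,F_k ⊆ T be subspaces with codim(∩_{i∈J} F_i) ≥ |J| for all nonempty J, and suppose H_k is a hyperplane containing F_k such that H_k does not contain any intersection F_J (J ⊆ {1,…,k}) unless F_J ⊆ F_k. Then the subspaces F_i' := F_i ∩ H_k (i = 1,…,k−1) of H_k satisfy: for all nonempty J* ⊆ {1,…,k−1}, the codimension of ∩_{i∈J*} F_i' in H_k is at least |J*|. -/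
open Module

/-- The induction step in the hyperplane transversality theorem: let
`F 0, …, F k` (indexed by `Fin (k+1)`, with last index playing the role of `F_k`) be
subspaces of a finite-dimensional vector space `T` with `codim (⋂_{i∈J} F i) ≥ |J|` for all
nonempty `J`, and suppose `H` is a hyperplane containing `F (last)` such that `H` does not
contain any intersection `F_J` unless `F_J ⊆ F (last)`.  Then the subspaces
`F i ⊓ H` (`i = 0, …, k−1`) of `H` satisfy: for all nonempty `J* ⊆ {0,…,k−1}`, the
codimension of `⋂_{i∈J*} (F i ⊓ H)` in `H` is at least `|J*|`. -/
theorem stmt3 {K : Type*} [Field K]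
    {T : Type*} [AddCommGroup T] [Module K T] [FiniteDimensional K T]
    (k : ℕ) (F : Fin (k + 1) → Submodule K T)
    (hF : ∀ J : Finset (Fin (k + 1)), J.Nonempty →
      J.card ≤ finrank K T - finrank K ↥(⨅ i ∈ J, F i))
    (H : Submodule K T)
    (hHhyp : finrank K T - finrank K ↥H = 1)
    (hFH : F (Fin.last k) ≤ H)
    (hHavoid : ∀ J : Finset (Fin (k + 1)), J.Nonempty →
      ¬ (⨅ i ∈ J, F i) ≤ F (Fin.last k) → ¬ (⨅ i ∈ J, F i) ≤ H) :
    ∀ J : Finset (Fin k), J.Nonempty →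
      J.card ≤ finrank K ↥H - finrank K ↥(⨅ i ∈ J, (F i.castSucc ⊓ H)) := by
  intro J hJ
  set emb : Fin k ↪ Fin (k + 1) := ⟨Fin.castSucc, Fin.castSucc_injective k⟩ with hemb
  set G : Submodule K T := ⨅ i ∈ J, F i.castSucc with hG
  obtain ⟨i0, hi0⟩ := hJ
  have hinf : (⨅ i ∈ J, (F i.castSucc ⊓ H)) = G ⊓ H := by
    apply le_antisymm
    · exact le_inf (le_iInf₂ fun i hi => (iInf₂_le i hi).trans inf_le_left)
        ((iInf₂_le i0 hi0).trans inf_le_right)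
    · exact le_iInf₂ fun i hi => inf_le_inf (iInf₂_le (α := Submodule K T) i hi) le_rfl
  have hmap : (⨅ i ∈ J.map emb, F i) = G := by
    rw [hG, ← Finset.inf_eq_iInf, ← Finset.inf_eq_iInf, Finset.inf_map]
    rfl
  have hle : finrank K H ≤ finrank K T := Submodule.finrank_le H
  have hGle : finrank K G ≤ finrank K T := Submodule.finrank_le G
  have hFJ : J.card ≤ finrank K T - finrank K G := by
    have := hF (J.map emb) ⟨emb i0, Finset.mem_map_of_mem emb hi0⟩
    rwa [hmap, Finset.card_map] at this
  rw [hinf]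
  by_cases hGH : G ≤ H
  · -- then G ≤ F last
    have hGF : G ≤ F (Fin.last k) := by
      by_contra hc
      exact hHavoid (J.map emb) ⟨emb i0, Finset.mem_map_of_mem emb hi0⟩
        (by rwa [hmap]) (by rwa [hmap])
    have hnot : Fin.last k ∉ J.map emb := by
      simp only [Finset.mem_map, hemb]
      rintro ⟨i, -, hi⟩
      exact (Fin.castSucc_lt_last i).ne hi
    have hcard : (insert (Fin.last k) (J.map emb)).card = J.card + 1 := by
      rw [Finset.card_insert_of_notMem hnot, Finset.card_map]
    have hinf2 : (⨅ i ∈ insert (Fin.last k) (J.map emb), F i) = G := by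
      rw [Finset.iInf_insert, hmap, inf_eq_right.mpr hGF]
    have h2 := hF (insert (Fin.last k) (J.map emb))
      ⟨Fin.last k, Finset.mem_insert_self _ _⟩
    rw [hinf2, hcard] at h2
    rw [inf_eq_left.mpr hGH]
    omega
  · have hsup : G ⊔ H = ⊤ := by
      have hlt : H < G ⊔ H := lt_of_le_of_ne le_sup_right
        (fun h => hGH (h ▸ le_sup_left))
      have h1 : finrank K H < finrank K ↥(G ⊔ H) :=
        Submodule.finrank_lt_finrank_of_lt hlt
      have h2 : finrank K ↥(G ⊔ H) ≤ finrank K T := Submodule.finrank_le _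
      exact Submodule.eq_top_of_finrank_eq (le_antisymm h2 (by omega))
    have hdim := Submodule.finrank_sup_add_finrank_inf_eq G H
    rw [hsup] at hdim
    rw [finrank_top] at hdim
    omega
end

section
/- Let Y ⊆ ℝ^n be a semi-convex set, written as a disjoint union Y = ∪_i Δ_i° of relative interiors of finitely many convex polytopes. Then the quantity μ(Y) := Σ_i (−1)^{dim Δ_i} is independent of the chosen decomposition. -/
open Module Set Filter Topology Function Bornology

/-!
The combinatorial Euler characteristic is computed by a sweep. For `f : ℝⁿ⁺¹ → ℤ`, let
`f' : ℝⁿ → ℤ` send `x` to the sum of the jumps `f (x, t) - f (x, t⁺)` along the vertical line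
over `x`; iterating `f ↦ f'` down to `ℝ⁰` defines `eulerIntegral`, which is additive on integer
combinations of indicators of relatively open bounded convex sets. If `P ⊆ ℝⁿ⁺¹` is bounded and
convex, the fibre of `relint P` over `x` is empty if `x ∉ relint (proj P)`; otherwise it is an
open interval (jump sum `-1`) or a point (jump sum `1`), according as the vertical direction
lies in the direction of `P` or not, and correspondingly `dim P = dim (proj P) + 1` or
`dim P = dim (proj P)`. By induction on `n`, `eulerIntegral` of the indicator of `relint P` is
`(-1) ^ dim P`, so both sums in the theorem equal `eulerIntegral` of the indicator of `Y`.
-/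

section IntrinsicInterior

variable {E F : Type*} [NormedAddCommGroup E] [NormedSpace ℝ E] [NormedAddCommGroup F]
  [NormedSpace ℝ F] {s : Set E} {x y : E}

theorem mem_intrinsicInterior_iff_dist :
    x ∈ intrinsicInterior ℝ s ↔
      x ∈ affineSpan ℝ s ∧ ∃ ε > 0, ∀ y ∈ affineSpan ℝ s, dist y x < ε → y ∈ s := by
  constructor
  · rintro ⟨x, hx, rfl⟩
    obtain ⟨ε, hε, hball⟩ := Metric.mem_nhds_iff.1 (mem_interior_iff_mem_nhds.1 hx)
    refine ⟨x.2, ε, hε, fun y hy hyx => ?_⟩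
    exact hball (show (⟨y, hy⟩ : affineSpan ℝ s) ∈ Metric.ball x ε from hyx)
  · rintro ⟨hx, ε, hε, hball⟩
    refine ⟨⟨x, hx⟩, mem_interior_iff_mem_nhds.2 <| Metric.mem_nhds_iff.2 ⟨ε, hε, ?_⟩, rfl⟩
    exact fun y hy => hball y y.2 hy

theorem Convex.combo_intrinsicInterior_self_mem_intrinsicInterior (hs : Convex ℝ s)
    (hx : x ∈ intrinsicInterior ℝ s) (hy : y ∈ s) {a b : ℝ} (ha : 0 < a) (hb : 0 ≤ b)
    (hab : a + b = 1) : a • x + b • y ∈ intrinsicInterior ℝ s := by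
  rw [mem_intrinsicInterior_iff_dist] at hx ⊢
  obtain ⟨hxA, ε, hε, hball⟩ := hx
  have hyA := subset_affineSpan ℝ s hy
  obtain rfl : b = 1 - a := by linarith
  have hzA : a • x + (1 - a) • y ∈ affineSpan ℝ s := by
    rw [show a • x + (1 - a) • y = a • (x - y) +ᵥ y by rw [vadd_eq_add]; module]
    exact AffineSubspace.vadd_mem_of_mem_direction
      (Submodule.smul_mem _ a (AffineSubspace.vsub_mem_direction hxA hyA)) hyA
  refine ⟨hzA, a * ε, by positivity, fun w hwA hw => ?_⟩
  -- `w` is the image of `w'` under the homothety of ratio `a` centred at `y`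
  set w' := a⁻¹ • (w - (a • x + (1 - a) • y)) + x
  have hw'A : w' ∈ affineSpan ℝ s :=
    AffineSubspace.vadd_mem_of_mem_direction
      (Submodule.smul_mem _ _ (AffineSubspace.vsub_mem_direction hwA hzA)) hxA
  have hw' : dist w' x < ε := by
    rw [dist_eq_norm, add_sub_cancel_right, norm_smul, norm_inv, Real.norm_of_nonneg ha.le,
      ← dist_eq_norm, inv_mul_lt_iff₀ ha]
    exact hw
  have hw : w = a • w' + (1 - a) • y := by
    simp only [w', smul_add, smul_smul, mul_inv_cancel₀ ha.ne', one_smul]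
    abel
  rw [hw]
  exact hs (hball w' hw'A hw') hy ha.le hb hab

protected theorem Convex.intrinsicInterior (hs : Convex ℝ s) :
    Convex ℝ (intrinsicInterior ℝ s) := by
  intro x hx y hy a b ha hb hab
  rcases ha.eq_or_lt with rfl | ha
  · rw [zero_add] at hab
    simpa [hab] using hy
  · exact hs.combo_intrinsicInterior_self_mem_intrinsicInterior hx (intrinsicInterior_subset hy)
      ha hb hab

theorem LinearMap.mem_affineSpan_image (π : E →ₗ[ℝ] F) (hx : x ∈ affineSpan ℝ s) :
    π x ∈ affineSpan ℝ (π '' s) := by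
  rw [← π.coe_toAffineMap, ← AffineSubspace.map_span]
  exact AffineSubspace.mem_map.2 ⟨x, hx, rfl⟩

theorem LinearMap.vectorSpan_image (π : E →ₗ[ℝ] F) (s : Set E) :
    vectorSpan ℝ (π '' s) = (vectorSpan ℝ s).map π := by
  simpa using (AffineMap.map_vectorSpan π.toAffineMap (s := s)).symm

theorem LinearMap.image_intrinsicInterior_subset [FiniteDimensional ℝ E] (π : E →ₗ[ℝ] F)
    (s : Set E) : π '' intrinsicInterior ℝ s ⊆ intrinsicInterior ℝ (π '' s) := by
  set V := vectorSpan ℝ s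
  obtain ⟨C, hC, hpre⟩ := ContinuousLinearMap.exists_preimage_norm_le
    (π.submoduleMap V).toContinuousLinearMap (π.submoduleMap_surjective V)
  rintro _ ⟨x, hx, rfl⟩
  rw [mem_intrinsicInterior_iff_dist] at hx ⊢
  obtain ⟨hxA, ε, hε, hball⟩ := hx
  refine ⟨π.mem_affineSpan_image hxA, ε / C, by positivity, fun z hzA hz => ?_⟩
  have hzW : z - π x ∈ V.map π := by
    rw [← π.vectorSpan_image, ← direction_affineSpan]
    exact AffineSubspace.vsub_mem_direction hzA (π.mem_affineSpan_image hxA)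
  obtain ⟨v, hv, hvC⟩ := hpre ⟨z - π x, hzW⟩
  have hvz : π v = z - π x := congrArg Subtype.val hv
  refine ⟨v + x, hball _ ?_ ?_, by rw [map_add, hvz, sub_add_cancel]⟩
  · refine AffineSubspace.vadd_mem_of_mem_direction ?_ hxA
    rw [direction_affineSpan]
    exact v.2
  · rw [dist_eq_norm, add_sub_cancel_right]
    calc ‖(v : E)‖ = ‖v‖ := rfl
      _ ≤ C * ‖z - π x‖ := hvC
      _ < C * (ε / C) := by rw [← dist_eq_norm]; gcongr
      _ = ε := by field_simp

theorem Convex.intrinsicInterior_image_subset [FiniteDimensional ℝ E] (hs : Convex ℝ s)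
    (π : E →ₗ[ℝ] F) : intrinsicInterior ℝ (π '' s) ⊆ π '' intrinsicInterior ℝ s := by
  intro y hy
  obtain ⟨x₀, hx₀⟩ := (Nonempty.of_image ⟨y, intrinsicInterior_subset hy⟩).intrinsicInterior hs
  rw [mem_intrinsicInterior_iff_dist] at hy
  obtain ⟨hyB, ε, hε, hball⟩ := hy
  have hy₀B : π x₀ ∈ affineSpan ℝ (π '' s) :=
    π.mem_affineSpan_image (subset_affineSpan ℝ s (intrinsicInterior_subset hx₀))
  obtain ⟨t, ht, htε⟩ := exists_pos_mul_lt hε ‖y - π x₀‖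
  -- push `y` slightly away from `π x₀`, staying inside `π '' s`
  obtain ⟨w, hw, hwz⟩ : t • (y - π x₀) + y ∈ π '' s := by
    refine hball _ (AffineSubspace.vadd_mem_of_mem_direction ?_ hyB) ?_
    · exact Submodule.smul_mem _ t (AffineSubspace.vsub_mem_direction hyB hy₀B)
    · rwa [dist_eq_norm, add_sub_cancel_right, norm_smul, Real.norm_of_nonneg ht.le, mul_comm]
  refine ⟨(t / (1 + t)) • x₀ + (1 / (1 + t)) • w,
    hs.combo_intrinsicInterior_self_mem_intrinsicInterior hx₀ hw (by positivity) (by positivity)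
      (by field_simp; ring), ?_⟩
  rw [map_add, map_smul, map_smul, hwz]
  match_scalars <;> field_simp <;> ring

theorem Convex.image_intrinsicInterior [FiniteDimensional ℝ E] (hs : Convex ℝ s)
    (π : E →ₗ[ℝ] F) : π '' intrinsicInterior ℝ s = intrinsicInterior ℝ (π '' s) :=
  (π.image_intrinsicInterior_subset s).antisymm (hs.intrinsicInterior_image_subset π)

end IntrinsicInterior

section Jumps

noncomputable def jumpSum (g : ℝ → ℤ) : ℤ :=
  ∑ᶠ t, (g t - rightLim g t)

structure HasJumpSum (g : ℝ → ℤ) (m : ℤ) : Prop where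
  tendsto_rightLim (t : ℝ) : Tendsto g (𝓝[>] t) (𝓝 (rightLim g t))
  finite_support_sub_rightLim : (support fun t => g t - rightLim g t).Finite
  jumpSum_eq : jumpSum g = m

theorem jumpSum_sum {ι : Type*} (s : Finset ι) (c : ι → ℤ) {g : ι → ℝ → ℤ} {m : ι → ℤ}
    (hg : ∀ i ∈ s, HasJumpSum (g i) (m i)) :
    jumpSum (fun t => ∑ i ∈ s, c i * g i t) = ∑ i ∈ s, c i * m i := by
  have hlim (t : ℝ) :
      rightLim (fun t => ∑ i ∈ s, c i * g i t) t = ∑ i ∈ s, c i * rightLim (g i) t :=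
    rightLim_eq_of_tendsto <|
      tendsto_finsetSum s fun i hi => ((hg i hi).tendsto_rightLim t).const_mul (c i)
  simp only [jumpSum, hlim, ← Finset.sum_sub_distrib, ← mul_sub]
  rw [finsum_sum_comm s _ fun i hi =>
    (hg i hi).finite_support_sub_rightLim.subset (support_mul_subset_right (fun _ => c i) _)]
  refine Finset.sum_congr rfl fun i hi => ?_
  rw [← mul_finsum, ← (hg i hi).jumpSum_eq, jumpSum]

variable {g r : ℝ → ℤ} {a b : ℝ} {m : ℤ}

theorem rightLim_eq_of_forall_tendsto (hr : ∀ t, Tendsto g (𝓝[>] t) (𝓝 (r t))) :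
    rightLim g = r :=
  funext fun t => rightLim_eq_of_tendsto (hr t)

theorem HasJumpSum.of_sub_eq_single (hr : ∀ t, Tendsto g (𝓝[>] t) (𝓝 (r t)))
    (hgr : g - r = Pi.single a m) : HasJumpSum g m := by
  have hgr' : (fun t => g t - rightLim g t) = Pi.single a m := by
    rw [rightLim_eq_of_forall_tendsto hr, ← hgr]
    rfl
  refine ⟨by simpa only [rightLim_eq_of_forall_tendsto hr] using hr, ?_, ?_⟩
  · rw [hgr']
    exact (finite_singleton a).subset Pi.support_single_subset
  · rw [jumpSum, hgr', finsum_eq_single _ a fun t ht => by simp [ht], Pi.single_eq_same]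

theorem hasJumpSum_zero : HasJumpSum 0 0 :=
  .of_sub_eq_single (r := 0) (a := 0) (fun _ => tendsto_const_nhds) (by simp)

theorem eventually_nhdsGT_lt_iff (t c : ℝ) : ∀ᶠ u in 𝓝[>] t, (u < c ↔ t < c) ∧ (c < u ↔ c ≤ t) := by
  rcases lt_or_ge t c with h | h
  · filter_upwards [Ioo_mem_nhdsGT h] with u hu
    exact ⟨iff_of_true hu.2 h, iff_of_false hu.2.not_gt h.not_ge⟩
  · filter_upwards [self_mem_nhdsWithin] with u (hu : t < u)
    exact ⟨iff_of_false (by linarith) h.not_gt, iff_of_true (by linarith) h⟩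

theorem tendsto_indicator_Ioo_nhdsGT (a b t : ℝ) :
    Tendsto ((Ioo a b).indicator (1 : ℝ → ℤ)) (𝓝[>] t) (𝓝 ((Ico a b).indicator 1 t)) := by
  refine tendsto_nhds_of_eventually_eq ?_
  filter_upwards [eventually_nhdsGT_lt_iff t a, eventually_nhdsGT_lt_iff t b] with u ha hb
  simp only [indicator_apply, mem_Ioo, mem_Ico, ha.2, hb.1, Pi.one_apply]

theorem indicator_Ioo_sub_indicator_Ico (hab : a < b) :
    (Ioo a b).indicator 1 - (Ico a b).indicator 1 = (Pi.single a (-1) : ℝ → ℤ) := by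
  ext t
  rcases eq_or_ne t a with rfl | ht
  · simp [hab]
  · simp [indicator_apply, ht, ht.symm, le_iff_lt_or_eq]

theorem tendsto_indicator_singleton_nhdsGT (c t : ℝ) :
    Tendsto (({c} : Set ℝ).indicator (1 : ℝ → ℤ)) (𝓝[>] t) (𝓝 0) := by
  refine tendsto_nhds_of_eventually_eq ?_
  have hne : ∀ᶠ u in 𝓝[>] t, u ≠ c := by
    rcases eq_or_ne t c with rfl | htc
    · filter_upwards [self_mem_nhdsWithin] with u (hu : t < u) using hu.ne'
    · exact eventually_ne_nhdsWithin htc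
  filter_upwards [hne] with u hu
  simp [hu]

theorem hasJumpSum_indicator_Ioo (hab : a < b) : HasJumpSum ((Ioo a b).indicator 1) (-1) :=
  .of_sub_eq_single (tendsto_indicator_Ioo_nhdsGT a b) (indicator_Ioo_sub_indicator_Ico hab)

theorem hasJumpSum_indicator_singleton (c : ℝ) : HasJumpSum (({c} : Set ℝ).indicator 1) 1 :=
  .of_sub_eq_single (a := c) (tendsto_indicator_singleton_nhdsGT c)
    (by ext t; simp [Pi.single_apply])

end Jumps

theorem Real.exists_eq_Ioo_of_isOpen_of_convex {s : Set ℝ} (ho : IsOpen s) (hc : Convex ℝ s)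
    (hb : IsBounded s) (hne : s.Nonempty) : ∃ a b, a < b ∧ s = Ioo a b := by
  have hsub : s ⊆ Ioo (sInf s) (sSup s) := by
    intro t ht
    obtain ⟨δ, hδ, hball⟩ := Metric.isOpen_iff.1 ho t ht
    rw [Real.ball_eq_Ioo] at hball
    have hlo : t - δ / 2 ∈ s := hball ⟨by linarith, by linarith⟩
    have hhi : t + δ / 2 ∈ s := hball ⟨by linarith, by linarith⟩
    exact ⟨by linarith [csInf_le hb.bddBelow hlo], by linarith [le_csSup hb.bddAbove hhi]⟩
  obtain ⟨t, ht⟩ := hne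
  exact ⟨_, _, (hsub ht).1.trans (hsub ht).2, hsub.antisymm
    (IsConnected.Ioo_csInf_csSup_subset ⟨⟨t, ht⟩, hc.isPreconnected⟩ hb.bddBelow hb.bddAbove)⟩

section Vertical

variable {n : ℕ}

def dropLast (n : ℕ) : (Fin (n + 1) → ℝ) →ₗ[ℝ] Fin n → ℝ :=
  LinearMap.funLeft ℝ ℝ Fin.castSucc

noncomputable def verticalLine (x : Fin n → ℝ) : ℝ →ᵃ[ℝ] Fin (n + 1) → ℝ :=
  AffineMap.lineMap (Fin.snoc x 0) (Fin.snoc x 1)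

theorem verticalLine_apply (x : Fin n → ℝ) (t : ℝ) : verticalLine x t = Fin.snoc x t := by
  ext i
  refine Fin.lastCases ?_ (fun j => ?_) i <;> simp [verticalLine, AffineMap.lineMap_apply]

theorem verticalLine_sub (x : Fin n → ℝ) (t t' : ℝ) :
    verticalLine x t - verticalLine x t' = (t - t') • Pi.single (Fin.last n) 1 := by
  ext i
  refine Fin.lastCases ?_ (fun j => ?_) i <;> simp [verticalLine_apply]

theorem dropLast_snoc (x : Fin n → ℝ) (t : ℝ) : dropLast n (Fin.snoc x t) = x := by
  ext i
  simp [dropLast]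

theorem ker_dropLast : LinearMap.ker (dropLast n) = ℝ ∙ Pi.single (Fin.last n) 1 := by
  ext v
  rw [LinearMap.mem_ker, Submodule.mem_span_singleton]
  constructor
  · intro hv
    refine ⟨v (Fin.last n), funext fun i => Fin.lastCases ?_ (fun j => ?_) i⟩
    · simp
    · simpa [dropLast, (Fin.castSucc_lt_last j).ne] using (congrFun hv j).symm
  · rintro ⟨a, rfl⟩
    ext j
    simp [dropLast, (Fin.castSucc_lt_last j).ne]

open scoped Classical in
theorem finrank_map_dropLast_add (V : Submodule ℝ (Fin (n + 1) → ℝ)) :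
    finrank ℝ (V.map (dropLast n)) + (if Pi.single (Fin.last n) 1 ∈ V then 1 else 0) =
      finrank ℝ V := by
  have hrank := LinearMap.finrank_range_add_finrank_ker ((dropLast n).domRestrict V)
  rw [LinearMap.range_domRestrict, LinearMap.ker_domRestrict, ker_dropLast] at hrank
  rw [← hrank]
  congr 1
  split_ifs with he
  · have hle : ℝ ∙ Pi.single (Fin.last n) 1 ≤ V := (Submodule.span_singleton_le_iff_mem _ _).2 he
    rw [(Submodule.comapSubtypeEquivOfLe hle).finrank_eq, finrank_span_singleton (by simp)]
  · have hdisj : Disjoint V (ℝ ∙ Pi.single (Fin.last n) 1) :=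
      (Submodule.disjoint_span_singleton' (by simp)).2 he
    rw [Submodule.disjoint_iff_comap_eq_bot.1 hdisj, finrank_bot]

variable {P : Set (Fin (n + 1) → ℝ)} (x : Fin n → ℝ)

theorem nonempty_preimage_verticalLine_iff (hP : Convex ℝ P) :
    (verticalLine x ⁻¹' intrinsicInterior ℝ P).Nonempty ↔
      x ∈ intrinsicInterior ℝ (dropLast n '' P) := by
  rw [← hP.image_intrinsicInterior]
  constructor
  · rintro ⟨t, ht⟩
    exact ⟨_, ht, by rw [verticalLine_apply, dropLast_snoc]⟩
  · rintro ⟨p, hp, rfl⟩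
    refine ⟨p (Fin.last n), ?_⟩
    rwa [mem_preimage, verticalLine_apply, show dropLast n p = Fin.init p from rfl,
      Fin.snoc_init_self]

theorem exists_preimage_verticalLine_eq_Ioo (hP : Convex ℝ P) (hPb : IsBounded P)
    (he : Pi.single (Fin.last n) 1 ∈ vectorSpan ℝ P)
    (hne : (verticalLine x ⁻¹' intrinsicInterior ℝ P).Nonempty) :
    ∃ a b, a < b ∧ verticalLine x ⁻¹' intrinsicInterior ℝ P = Ioo a b := by
  obtain ⟨t₀, ht₀⟩ := hne
  have hA (t : ℝ) : verticalLine x t ∈ affineSpan ℝ P := by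
    rw [← vsub_vadd (verticalLine x t) (verticalLine x t₀), vsub_eq_sub, verticalLine_sub]
    refine AffineSubspace.vadd_mem_of_mem_direction ?_
      (subset_affineSpan ℝ P (intrinsicInterior_subset ht₀))
    rw [direction_affineSpan]
    exact Submodule.smul_mem _ _ he
  -- the whole line lies in `affineSpan ℝ P`, where `intrinsicInterior ℝ P` is open
  have hopen : IsOpen (verticalLine x ⁻¹' intrinsicInterior ℝ P) := by
    have hpre : verticalLine x ⁻¹' intrinsicInterior ℝ P =
        (fun t => (⟨verticalLine x t, hA t⟩ : affineSpan ℝ P)) ⁻¹' interior ((↑) ⁻¹' P) := by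
      ext t
      refine ⟨fun ⟨y, hy, hyt⟩ => ?_, fun ht => ⟨_, ht, rfl⟩⟩
      obtain rfl : y = ⟨_, hA t⟩ := Subtype.ext hyt
      exact hy
    rw [hpre]
    exact isOpen_interior.preimage ((verticalLine x).continuous_of_finiteDimensional.subtype_mk hA)
  have hbdd : IsBounded (verticalLine x ⁻¹' intrinsicInterior ℝ P) := by
    refine ((ContinuousLinearMap.proj (R := ℝ) (Fin.last n)).lipschitz.isBounded_image hPb).subset
      fun t ht => ⟨_, intrinsicInterior_subset ht, ?_⟩
    simp [verticalLine_apply]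
  exact Real.exists_eq_Ioo_of_isOpen_of_convex hopen
    (hP.intrinsicInterior.affine_preimage _) hbdd ⟨t₀, ht₀⟩

theorem exists_preimage_verticalLine_eq_singleton
    (he : Pi.single (Fin.last n) 1 ∉ vectorSpan ℝ P)
    (hne : (verticalLine x ⁻¹' intrinsicInterior ℝ P).Nonempty) :
    ∃ c, verticalLine x ⁻¹' intrinsicInterior ℝ P = {c} := by
  obtain ⟨t₀, ht₀⟩ := hne
  refine ⟨t₀, Subsingleton.eq_singleton_of_mem (fun t ht t' ht' => ?_) ht₀⟩
  by_contra htt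
  have hmem := vsub_mem_vectorSpan ℝ (intrinsicInterior_subset ht) (intrinsicInterior_subset ht')
  rw [vsub_eq_sub, verticalLine_sub] at hmem
  exact he (by simpa [sub_ne_zero.2 htt] using Submodule.smul_mem _ (t - t')⁻¹ hmem)

open scoped Classical in
theorem hasJumpSum_indicator_verticalLine (hP : Convex ℝ P) (hPb : IsBounded P) :
    HasJumpSum (fun t => (intrinsicInterior ℝ P).indicator 1 (Fin.snoc x t))
      ((if Pi.single (Fin.last n) 1 ∈ vectorSpan ℝ P then -1 else 1) *
        (intrinsicInterior ℝ (dropLast n '' P)).indicator 1 x) := by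
  have hfun : (fun t => (intrinsicInterior ℝ P).indicator 1 (Fin.snoc x t)) =
      (verticalLine x ⁻¹' intrinsicInterior ℝ P).indicator (1 : ℝ → ℤ) := by
    ext t
    simp only [indicator_apply, mem_preimage, verticalLine_apply, Pi.one_apply]
  rw [hfun]
  by_cases hx : x ∈ intrinsicInterior ℝ (dropLast n '' P)
  · have hne := (nonempty_preimage_verticalLine_iff x hP).2 hx
    rw [indicator_of_mem hx, Pi.one_apply, mul_one]
    split_ifs with he
    · obtain ⟨a, b, hab, hF⟩ := exists_preimage_verticalLine_eq_Ioo x hP hPb he hne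
      rw [hF]
      exact hasJumpSum_indicator_Ioo hab
    · obtain ⟨c, hF⟩ := exists_preimage_verticalLine_eq_singleton x he hne
      rw [hF]
      exact hasJumpSum_indicator_singleton c
  · rw [not_nonempty_iff_eq_empty.1 (mt (nonempty_preimage_verticalLine_iff x hP).1 hx),
      indicator_empty, indicator_of_notMem hx, mul_zero]
    exact hasJumpSum_zero

end Vertical

noncomputable def eulerIntegral : (n : ℕ) → ((Fin n → ℝ) → ℤ) → ℤ
  | 0, f => f 0
  | n + 1, f => eulerIntegral n fun x => jumpSum fun t => f (Fin.snoc x t)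

open scoped Classical in
theorem neg_one_pow_finrank_vectorSpan {n : ℕ} (P : Set (Fin (n + 1) → ℝ)) :
    (-1 : ℤ) ^ finrank ℝ (vectorSpan ℝ P) =
      (if Pi.single (Fin.last n) 1 ∈ vectorSpan ℝ P then -1 else 1) *
        (-1) ^ finrank ℝ (vectorSpan ℝ (dropLast n '' P)) := by
  rw [← finrank_map_dropLast_add (vectorSpan ℝ P), (dropLast n).vectorSpan_image, pow_add]
  split_ifs <;> ring

theorem eulerIntegral_sum_indicator_intrinsicInterior {ι : Type*} [Fintype ι] :
    ∀ {n : ℕ} (c : ι → ℤ) (P : ι → Set (Fin n → ℝ)), (∀ i, Convex ℝ (P i)) →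
      (∀ i, IsBounded (P i)) → (∀ i, (P i).Nonempty) →
      eulerIntegral n (fun x => ∑ i, c i * (intrinsicInterior ℝ (P i)).indicator 1 x) =
        ∑ i, c i * (-1) ^ finrank ℝ (vectorSpan ℝ (P i))
  | 0, c, P, _, _, hne => by
    refine Finset.sum_congr rfl fun i _ => ?_
    obtain ⟨y, hy⟩ := hne i
    rw [(subsingleton_of_subsingleton (s := P i)).eq_singleton_of_mem (Subsingleton.elim y 0 ▸ hy)]
    simp [finrank_zero_of_subsingleton]
  | n + 1, c, P, hconv, hbdd, hne => by
    classical
    have hstep : (fun x => jumpSum fun t =>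
          ∑ i, c i * (intrinsicInterior ℝ (P i)).indicator 1 (Fin.snoc x t)) =
        fun x => ∑ i, (c i * if Pi.single (Fin.last n) 1 ∈ vectorSpan ℝ (P i) then -1 else 1) *
          (intrinsicInterior ℝ (dropLast n '' P i)).indicator 1 x := by
      ext x
      simp only [jumpSum_sum _ c fun i _ => hasJumpSum_indicator_verticalLine x (hconv i) (hbdd i),
        mul_assoc]
    rw [eulerIntegral, hstep, eulerIntegral_sum_indicator_intrinsicInterior _ (dropLast n '' P ·)
      (fun i => (hconv i).linear_image _)
      (fun i => (dropLast n).toContinuousLinearMap.lipschitz.isBounded_image (hbdd i))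
      (fun i => (hne i).image _)]
    simp only [neg_one_pow_finrank_vectorSpan, mul_assoc]

theorem eulerIntegral_indicator_eq_sum {n : ℕ} {ι : Type*} [Fintype ι] {Y : Set (Fin n → ℝ)}
    {P : ι → Set (Fin n → ℝ)} (hconv : ∀ i, Convex ℝ (P i)) (hbdd : ∀ i, IsBounded (P i))
    (hne : ∀ i, (P i).Nonempty)
    (hdisj : Pairwise fun i j => Disjoint (intrinsicInterior ℝ (P i)) (intrinsicInterior ℝ (P j)))
    (hY : ⋃ i, intrinsicInterior ℝ (P i) = Y) :
    eulerIntegral n (Y.indicator 1) = ∑ i, (-1) ^ finrank ℝ (vectorSpan ℝ (P i)) := by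
  have hind : Y.indicator (1 : (Fin n → ℝ) → ℤ) =
      fun x => ∑ i, 1 * (intrinsicInterior ℝ (P i)).indicator 1 x := by
    simp only [one_mul, ← hY]
    simpa using Finset.indicator_biUnion Finset.univ (fun i => intrinsicInterior ℝ (P i))
      (f := (1 : (Fin n → ℝ) → ℤ)) fun i _ j _ hij => hdisj hij
  rw [hind, eulerIntegral_sum_indicator_intrinsicInterior _ _ hconv hbdd hne]
  simp

theorem eulerIntegral_indicator_eq_sum_of_convexHull {n : ℕ} {ι : Type*} [Fintype ι]
    {Y : Set (Fin n → ℝ)} {P : ι → Set (Fin n → ℝ)}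
    (hP : ∀ i, ∃ s : Finset (Fin n → ℝ), s.Nonempty ∧ P i = convexHull ℝ ↑s)
    (hdisj : Pairwise fun i j => Disjoint (intrinsicInterior ℝ (P i)) (intrinsicInterior ℝ (P j)))
    (hY : ⋃ i, intrinsicInterior ℝ (P i) = Y) :
    eulerIntegral n (Y.indicator 1) = ∑ i, (-1) ^ finrank ℝ (vectorSpan ℝ (P i)) := by
  choose s hs hPs using hP
  refine eulerIntegral_indicator_eq_sum (fun i => ?_) (fun i => ?_) (fun i => ?_) hdisj hY <;>
    rw [hPs i]
  · exact convex_convexHull ℝ _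
  · exact ((s i).finite_toSet.isCompact_convexHull ℝ).isBounded
  · exact (hs i).to_set.convexHull

/-- Let `Y ⊆ ℝⁿ` be a semi-convex set, written in two ways as a disjoint
union of relative interiors of finitely many convex polytopes.  Then the combinatorial
Euler characteristic `μ(Y) = Σᵢ (−1)^{dim Δᵢ}` is independent of the chosen
decomposition. -/
theorem stmt8 {n : ℕ} (Y : Set (Fin n → ℝ)) {k l : ℕ}
    (Δ : Fin k → Set (Fin n → ℝ)) (Δ' : Fin l → Set (Fin n → ℝ))
    (hΔ : ∀ i, ∃ s : Finset (Fin n → ℝ), s.Nonempty ∧ Δ i = convexHull ℝ ↑s)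
    (hΔ' : ∀ j, ∃ s : Finset (Fin n → ℝ), s.Nonempty ∧ Δ' j = convexHull ℝ ↑s)
    (hdisj : Pairwise fun i j => Disjoint (intrinsicInterior ℝ (Δ i)) (intrinsicInterior ℝ (Δ j)))
    (hdisj' : Pairwise fun i j => Disjoint (intrinsicInterior ℝ (Δ' i)) (intrinsicInterior ℝ (Δ' j)))
    (hY : ⋃ i, intrinsicInterior ℝ (Δ i) = Y)
    (hY' : ⋃ j, intrinsicInterior ℝ (Δ' j) = Y) :
    ∑ i, (-1 : ℤ) ^ (finrank ℝ ↥(vectorSpan ℝ (Δ i))) =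
      ∑ j, (-1 : ℤ) ^ (finrank ℝ ↥(vectorSpan ℝ (Δ' j))) := by
  rw [← eulerIntegral_indicator_eq_sum_of_convexHull hΔ hdisj hY,
    eulerIntegral_indicator_eq_sum_of_convexHull hΔ' hdisj' hY']
end

section
/- For G = GL(n, ℂ) the Gelfand–Zetlin polytope map is additive: for any two dominant weights λ = (λ_1 ≤ ⋯ ≤ λ_n) and γ = (γ_1 ≤ ⋯ ≤ γ_n) (more generally any two weakly increasing n-tuples of reals), the Minkowski sum of Gelfand–Zetlin polytopes satisfies Δ_GZ(λ + γ) = Δ_GZ(λ) + Δ_GZ(γ). -/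
open Pointwise

/-- Index set for the free entries of a Gelfand–Zetlin pattern for `GL(n)`: pairs `(i, j)`
with `i ≤ j` and `j` below the top row (0-indexed: `j + 1 < n`). -/
def GZIndex (n : ℕ) : Type :=
  {q : Fin n × Fin n // q.1 ≤ q.2 ∧ (q.2 : ℕ) + 1 < n}

/-- The entry `x_{i,j}` of the Gelfand–Zetlin pattern with free entries `x` and top row
`lam` (rows are 0-indexed; the top row `j = n − 1` is `lam`). -/
def gzEntry {n : ℕ} (lam : Fin n → ℝ) (x : GZIndex n → ℝ) (i j : Fin n) : ℝ :=
  if h : i ≤ j ∧ (j : ℕ) + 1 < n then x ⟨(i, j), h⟩ else lam i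

/-- The Gelfand–Zetlin polytope `Δ_GZ(lam) ⊆ ℝ^{n(n−1)/2}` of a weakly increasing `n`-tuple
`lam`: the set of triangular arrays satisfying the interlacing inequalities
`x_{i,j+1} ≤ x_{i,j} ≤ x_{i+1,j+1}` (with top row `x_{i,n} = lam i`). -/
def gzPolytope {n : ℕ} (lam : Fin n → ℝ) : Set (GZIndex n → ℝ) :=
  {x | ∀ (i j : Fin n) (hij : i ≤ j) (hj : (j : ℕ) + 1 < n),
    gzEntry lam x i ⟨(j : ℕ) + 1, hj⟩ ≤ gzEntry lam x i j ∧
    gzEntry lam x i j ≤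
      gzEntry lam x ⟨(i : ℕ) + 1, lt_of_le_of_lt (Nat.succ_le_succ hij) hj⟩ ⟨(j : ℕ) + 1, hj⟩}

def gzRowY (lam' : ℕ → ℝ) (E : ℕ → ℕ → ℝ) (m : ℕ) : ℕ → ℕ → ℝ
  | 0, i => lam' i
  | d+1, i => max (gzRowY lam' E m d i)
      (E i (m - (d+1)) - E (i+1) (m - d) + gzRowY lam' E m d (i+1))

lemma gzRowY_mono (lam' : ℕ → ℝ) (E : ℕ → ℕ → ℝ) (m : ℕ)
    (Hlam : ∀ i, i + 1 ≤ m → lam' i ≤ lam' (i+1))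
    (Hgam : ∀ i, i + 1 ≤ m → E i m - lam' i ≤ E (i+1) m - lam' (i+1))
    (HE1 : ∀ i j, i ≤ j → j + 1 ≤ m → E i (j+1) ≤ E i j)
    (HE2 : ∀ i j, i ≤ j → j + 1 ≤ m → E i j ≤ E (i+1) (j+1)) :
    ∀ d, d ≤ m → ∀ i, i + 1 ≤ m - d →
      gzRowY lam' E m d i ≤ gzRowY lam' E m d (i+1) ∧
      E i (m-d) - gzRowY lam' E m d i ≤ E (i+1) (m-d) - gzRowY lam' E m d (i+1) := by
  intro d
  induction d with
  | zero =>
    intro _ i hi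
    simp only [gzRowY, Nat.sub_zero] at *
    exact ⟨Hlam i hi, Hgam i hi⟩
  | succ d ih =>
    intro hd i hi
    have hj1 : m - (d+1) + 1 = m - d := by omega
    have hij : i + 1 ≤ m - (d+1) := hi
    have h1 := ih (by omega) i (by omega)
    have h2 := ih (by omega) (i+1) (by omega)
    have hE2 : E i (m-(d+1)) ≤ E (i+1) (m-d) := by
      have := HE2 i (m-(d+1)) (by omega) (by omega)
      rwa [hj1] at this
    have hE1 : E (i+1) (m-d) ≤ E (i+1) (m-(d+1)) := by
      have := HE1 (i+1) (m-(d+1)) (by omega) (by omega)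
      rwa [hj1] at this
    simp only [gzRowY]
    constructor
    · apply max_le
      · exact le_trans h1.1 (le_max_left _ _)
      · apply le_trans _ (le_max_left _ _)
        linarith
    · have ha : E i (m-(d+1)) -
          max (gzRowY lam' E m d i)
            (E i (m - (d+1)) - E (i+1) (m - d) + gzRowY lam' E m d (i+1))
          ≤ E (i+1) (m-d) - gzRowY lam' E m d (i+1) := by
        have := le_max_right (gzRowY lam' E m d i)
          (E i (m - (d+1)) - E (i+1) (m - d) + gzRowY lam' E m d (i+1))
        linarith
      have hb : E (i+1) (m-d) - gzRowY lam' E m d (i+1) ≤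
          E (i+1) (m-(d+1)) -
          max (gzRowY lam' E m d (i+1))
            (E (i+1) (m - (d+1)) - E (i+1+1) (m - d) + gzRowY lam' E m d (i+1+1)) := by
        have hmax : max (gzRowY lam' E m d (i+1))
            (E (i+1) (m - (d+1)) - E (i+1+1) (m - d) + gzRowY lam' E m d (i+1+1))
            ≤ E (i+1) (m-(d+1)) - E (i+1) (m-d) + gzRowY lam' E m d (i+1) := by
          apply max_le
          · linarith
          · linarith [h2.2]
        linarith
      exact le_trans ha hb

lemma gzRowY_interlace (lam' : ℕ → ℝ) (E : ℕ → ℕ → ℝ) (m : ℕ)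
    (Hlam : ∀ i, i + 1 ≤ m → lam' i ≤ lam' (i+1))
    (Hgam : ∀ i, i + 1 ≤ m → E i m - lam' i ≤ E (i+1) m - lam' (i+1))
    (HE1 : ∀ i j, i ≤ j → j + 1 ≤ m → E i (j+1) ≤ E i j)
    (HE2 : ∀ i j, i ≤ j → j + 1 ≤ m → E i j ≤ E (i+1) (j+1)) :
    ∀ d, d + 1 ≤ m → ∀ i, i ≤ m - (d+1) →
      (gzRowY lam' E m d i ≤ gzRowY lam' E m (d+1) i) ∧
      (gzRowY lam' E m (d+1) i ≤ gzRowY lam' E m d (i+1)) ∧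
      (E i (m-d) - gzRowY lam' E m d i ≤ E i (m-(d+1)) - gzRowY lam' E m (d+1) i) ∧
      (E i (m-(d+1)) - gzRowY lam' E m (d+1) i ≤ E (i+1) (m-d) - gzRowY lam' E m d (i+1)) := by
  intro d hd i hi
  have hj1 : m - (d+1) + 1 = m - d := by omega
  have h1 := gzRowY_mono lam' E m Hlam Hgam HE1 HE2 d (by omega) i (by omega)
  have hE2 : E i (m-(d+1)) ≤ E (i+1) (m-d) := by
    have := HE2 i (m-(d+1)) (by omega) (by omega)
    rwa [hj1] at this
  have hE1 : E i (m-d) ≤ E i (m-(d+1)) := by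
    have := HE1 i (m-(d+1)) (by omega) (by omega)
    rwa [hj1] at this
  simp only [gzRowY]
  refine ⟨le_max_left _ _, max_le h1.1 (by linarith), ?_, ?_⟩
  · have hmax : max (gzRowY lam' E m d i)
        (E i (m - (d+1)) - E (i+1) (m - d) + gzRowY lam' E m d (i+1))
        ≤ E i (m-(d+1)) - E i (m-d) + gzRowY lam' E m d i := by
      apply max_le
      · linarith
      · linarith [h1.2]
    linarith
  · have := le_max_right (gzRowY lam' E m d i)
      (E i (m - (d+1)) - E (i+1) (m - d) + gzRowY lam' E m d (i+1))
    linarith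

/-- For `G = GL(n, ℂ)` the Gelfand–Zetlin polytope map is additive: for
any two weakly increasing `n`-tuples of reals `lam` and `gam` (in particular any two
dominant weights), the Minkowski sum satisfies
`Δ_GZ(lam + gam) = Δ_GZ(lam) + Δ_GZ(gam)`. -/
theorem stmt18 {n : ℕ} (lam gam : Fin n → ℝ) (hlam : Monotone lam) (hgam : Monotone gam) :
    gzPolytope (lam + gam) = gzPolytope lam + gzPolytope gam := by
  apply Set.Subset.antisymm
  · -- hard direction
    intro x hx
    rw [Set.mem_add]
    set m := n - 1 with hm
    set lam' : ℕ → ℝ := fun a => if h : a < n then lam ⟨a, h⟩ else 0 with hlam'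
    set E : ℕ → ℕ → ℝ := fun a b =>
      if h : a < n ∧ b < n then gzEntry (lam + gam) x ⟨a, h.1⟩ ⟨b, h.2⟩ else 0 with hE
    have hEfin : ∀ (a b : ℕ) (ha : a < n) (hb : b < n),
        E a b = gzEntry (lam + gam) x ⟨a, ha⟩ ⟨b, hb⟩ := by
      intro a b ha hb
      simp only [hE, dif_pos (And.intro ha hb)]
    have hEtop : ∀ (a : ℕ) (ha : a < n), E a m = lam ⟨a, ha⟩ + gam ⟨a, ha⟩ := by
      intro a ha
      have hmn : m < n := by omega
      rw [hEfin a m ha hmn, gzEntry, dif_neg (by simp only [Fin.val_mk]; omega)]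
      rfl
    have Hlam' : ∀ a, a + 1 ≤ m → lam' a ≤ lam' (a+1) := by
      intro a ha
      have h1 : a < n := by omega
      have h2 : a + 1 < n := by omega
      simp only [hlam', dif_pos h1, dif_pos h2]
      exact hlam (by simp [Fin.le_def])
    have Hgam' : ∀ a, a + 1 ≤ m → E a m - lam' a ≤ E (a+1) m - lam' (a+1) := by
      intro a ha
      have h1 : a < n := by omega
      have h2 : a + 1 < n := by omega
      rw [hEtop a h1, hEtop (a+1) h2]
      simp only [hlam', dif_pos h1, dif_pos h2]
      have : gam ⟨a, h1⟩ ≤ gam ⟨a+1, h2⟩ := hgam (by simp [Fin.le_def])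
      linarith
    have HE1' : ∀ a b, a ≤ b → b + 1 ≤ m → E a (b+1) ≤ E a b := by
      intro a b hab hb
      have ha : a < n := by omega
      have hb' : b < n := by omega
      have hb1 : b + 1 < n := by omega
      have := hx ⟨a, ha⟩ ⟨b, hb'⟩ (by simp [Fin.le_def, hab]) hb1
      rw [hEfin a (b+1) ha hb1, hEfin a b ha hb']
      exact this.1
    have HE2' : ∀ a b, a ≤ b → b + 1 ≤ m → E a b ≤ E (a+1) (b+1) := by
      intro a b hab hb
      have ha : a < n := by omega
      have hb' : b < n := by omega
      have ha1 : a + 1 < n := by omega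
      have hb1 : b + 1 < n := by omega
      have := hx ⟨a, ha⟩ ⟨b, hb'⟩ (by simp [Fin.le_def, hab]) hb1
      rw [hEfin a b ha hb', hEfin (a+1) (b+1) ha1 hb1]
      exact this.2
    -- the two summand patterns
    set y : GZIndex n → ℝ :=
      fun q : {q : Fin n × Fin n // q.1 ≤ q.2 ∧ (q.2 : ℕ) + 1 < n} =>
        gzRowY lam' E m (m - (q.1.2 : ℕ)) (q.1.1 : ℕ) with hy0
    set z : GZIndex n → ℝ := fun q => x q - y q with hz0
    have hYent : ∀ (i j : Fin n), (i : ℕ) ≤ (j : ℕ) →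
        gzEntry lam y i j = gzRowY lam' E m (m - (j : ℕ)) (i : ℕ) := by
      intro i j hij
      by_cases h : (j : ℕ) + 1 < n
      · rw [gzEntry, dif_pos ⟨hij, h⟩]
      · rw [gzEntry, dif_neg (by tauto)]
        have hjm : (j : ℕ) = m := by have := j.isLt; omega
        rw [hjm, Nat.sub_self]
        simp only [gzRowY, hlam', dif_pos i.isLt]
    have hZent : ∀ (i j : Fin n), (i : ℕ) ≤ (j : ℕ) →
        gzEntry gam z i j = E (i : ℕ) (j : ℕ) - gzRowY lam' E m (m - (j : ℕ)) (i : ℕ) := by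
      intro i j hij
      by_cases h : (j : ℕ) + 1 < n
      · rw [gzEntry, dif_pos ⟨hij, h⟩,
          hEfin (i : ℕ) (j : ℕ) i.isLt j.isLt, gzEntry, dif_pos ⟨hij, h⟩]
      · rw [gzEntry, dif_neg (by tauto)]
        have hjm : (j : ℕ) = m := by have := j.isLt; omega
        rw [hjm, Nat.sub_self]
        have := hEtop (i : ℕ) i.isLt
        simp only [gzRowY, hlam', dif_pos i.isLt, this]
        ring_nf
    have hym : y ∈ gzPolytope lam := by
      intro i j hij hj
      have hij' : (i : ℕ) ≤ (j : ℕ) := hij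
      have hjm : (j : ℕ) + 1 ≤ m := by omega
      have hd : (m - ((j : ℕ) + 1)) + 1 ≤ m := by omega
      have key := gzRowY_interlace lam' E m Hlam' Hgam' HE1' HE2'
        (m - ((j : ℕ) + 1)) hd (i : ℕ) (by omega)
      have e1 := hYent i j hij'
      have e2 := hYent i ⟨(j : ℕ) + 1, hj⟩ (by simp only [Fin.val_mk]; omega)
      have e3 := hYent ⟨(i : ℕ) + 1, lt_of_le_of_lt (Nat.succ_le_succ hij) hj⟩
        ⟨(j : ℕ) + 1, hj⟩ (by simp only [Fin.val_mk]; omega)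
      rw [e1, e2, e3]
      simp only [Fin.val_mk] at *
      have hrw : m - (j : ℕ) = (m - ((j : ℕ) + 1)) + 1 := by omega
      rw [hrw]
      exact ⟨key.1, key.2.1⟩
    have hzm : z ∈ gzPolytope gam := by
      intro i j hij hj
      have hij' : (i : ℕ) ≤ (j : ℕ) := hij
      have hjm : (j : ℕ) + 1 ≤ m := by omega
      have hd : (m - ((j : ℕ) + 1)) + 1 ≤ m := by omega
      have key := gzRowY_interlace lam' E m Hlam' Hgam' HE1' HE2'
        (m - ((j : ℕ) + 1)) hd (i : ℕ) (by omega)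
      have e1 := hZent i j hij'
      have e2 := hZent i ⟨(j : ℕ) + 1, hj⟩ (by simp only [Fin.val_mk]; omega)
      have e3 := hZent ⟨(i : ℕ) + 1, lt_of_le_of_lt (Nat.succ_le_succ hij) hj⟩
        ⟨(j : ℕ) + 1, hj⟩ (by simp only [Fin.val_mk]; omega)
      rw [e1, e2, e3]
      simp only [Fin.val_mk] at *
      have hrw1 : m - (j : ℕ) = (m - ((j : ℕ) + 1)) + 1 := by omega
      have hrw2 : m - (m - ((j : ℕ) + 1)) = (j : ℕ) + 1 := by omega
      have hrw3 : m - ((m - ((j : ℕ) + 1)) + 1) = (j : ℕ) := by omega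
      rw [hrw2, hrw3] at key
      rw [hrw1]
      exact ⟨key.2.2.1, key.2.2.2⟩
    refine ⟨y, hym, z, hzm, ?_⟩
    funext q
    show y q + (x q - y q) = x q
    ring
  · -- easy direction
    rintro w ⟨y, hy, z, hz, rfl⟩
    intro i j hij hj
    have hsum : ∀ a b : Fin n,
        gzEntry (lam + gam) (y + z) a b = gzEntry lam y a b + gzEntry gam z a b := by
      intro a b
      unfold gzEntry
      split
      · rfl
      · rfl
    have h1 := hy i j hij hj
    have h2 := hz i j hij hj
    rw [hsum, hsum, hsum]
    exact ⟨add_le_add h1.1 h2.1, add_le_add h1.2 h2.2⟩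
end
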